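/- arXiv:2309.03368 — 2 statements merged into one kernel-verified Lean document; each statement's English description precedes it below -/
import Mathlib

section
/- Fix v* ∈ ℝⁿ, u ∈ ℝⁿ, ω ∈ S^{n-1}, and define P(v*,u,ω) = e^{-|u'-v*|²} + e^{-|v'-v*|²} - e^{-|u-v*|²} - 1, where u' = u - [(u-v*)·ω]ω and v' = v* + [(u-v*)·ω]ω. Then P(v*,u,ω) = (1 - e^{|(u-v*)·ω|²})(e^{-|(u-v*)·ω|²} - e^{-|u-v*|²}). In particular P(v*,u,ω) ≤ 0, with equality if and only if ω ⊥ (v*-u) or ω = ±(v*-u)/|v*-u| (when u ≠ v*). -/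
open scoped RealInnerProductSpace

/-! Writing `t = (u - v*)·ω`, the vector `u' - v*` is `u - v*` with its `ω`-component removed
and `v' - v*` is that component, so by Pythagoras
`P = e^{-(|u - v*|² - t²)} + e^{-t²} - e^{-|u - v*|²} - 1`, which factors as
`(1 - e^{t²})(e^{-t²} - e^{-|u - v*|²})`. The first factor is `≤ 0` and, by Cauchy–Schwarz
`t² ≤ |u - v*|²`, the second is `≥ 0`. The product vanishes iff `t = 0` or `t² = |u - v*|²`,
and the latter is the equality case of Cauchy–Schwarz. -/

namespace Real

theorem exp_neg_sub_add_exp_neg_sub_exp_neg_sub_one (x y : ℝ) :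
    exp (-(y - x)) + exp (-x) - exp (-y) - 1 = (1 - exp x) * (exp (-x) - exp (-y)) := by
  have hx : exp x * exp (-x) = 1 := by rw [← exp_add, add_neg_cancel, exp_zero]
  have hxy : exp x * exp (-y) = exp (-(y - x)) := by rw [← exp_add]; ring_nf
  linear_combination hx - hxy

theorem one_sub_exp_mul_exp_neg_sub_exp_neg_nonpos {x y : ℝ} (hx : 0 ≤ x) (hxy : x ≤ y) :
    (1 - exp x) * (exp (-x) - exp (-y)) ≤ 0 :=
  mul_nonpos_of_nonpos_of_nonneg (sub_nonpos.2 (one_le_exp hx))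
    (sub_nonneg.2 (exp_le_exp.2 (neg_le_neg hxy)))

theorem one_sub_exp_mul_exp_neg_sub_exp_neg_eq_zero_iff {x y : ℝ} :
    (1 - exp x) * (exp (-x) - exp (-y)) = 0 ↔ x = 0 ∨ x = y := by
  rw [mul_eq_zero, sub_eq_zero, sub_eq_zero, eq_comm, exp_eq_one_iff, exp_eq_exp, neg_inj]

end Real

section UnitVector

variable {F : Type*} [NormedAddCommGroup F] [InnerProductSpace ℝ F] {ω : F}

theorem norm_inner_smul_sq_of_norm_eq_one (hω : ‖ω‖ = 1) (x : F) :
    ‖⟪x, ω⟫ • ω‖ ^ 2 = ⟪x, ω⟫ ^ 2 := by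
  rw [norm_smul, hω, mul_one, Real.norm_eq_abs, sq_abs]

theorem norm_sub_inner_smul_sq_of_norm_eq_one (hω : ‖ω‖ = 1) (x : F) :
    ‖x - ⟪x, ω⟫ • ω‖ ^ 2 = ‖x‖ ^ 2 - ⟪x, ω⟫ ^ 2 := by
  rw [norm_sub_sq_real, norm_inner_smul_sq_of_norm_eq_one hω, real_inner_smul_right]
  ring

theorem sq_inner_le_norm_sq_of_norm_eq_one (hω : ‖ω‖ = 1) (x : F) :
    ⟪x, ω⟫ ^ 2 ≤ ‖x‖ ^ 2 := by
  simpa [hω] using sq_le_sq' (neg_le_of_abs_le (abs_real_inner_le_norm x ω))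
    (le_of_abs_le (abs_real_inner_le_norm x ω))

theorem inner_eq_norm_iff_eq_inv_norm_smul (hω : ‖ω‖ = 1) {x : F} (hx : x ≠ 0) :
    ⟪x, ω⟫ = ‖x‖ ↔ ω = ‖x‖⁻¹ • x := by
  have hx' : ‖x‖ ≠ 0 := norm_ne_zero_iff.2 hx
  have hunit : ‖‖x‖⁻¹ • x‖ = 1 := by
    rw [norm_smul, norm_inv, norm_norm, inv_mul_cancel₀ hx']
  rw [eq_comm (a := ω), ← inner_eq_one_iff_of_norm_eq_one (𝕜 := ℝ) hunit hω,
    real_inner_smul_left, inv_mul_eq_one₀ hx', eq_comm]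

theorem sq_inner_eq_norm_sq_iff (hω : ‖ω‖ = 1) {x : F} (hx : x ≠ 0) :
    ⟪x, ω⟫ ^ 2 = ‖x‖ ^ 2 ↔ ω = ‖x‖⁻¹ • x ∨ ω = -(‖x‖⁻¹ • x) := by
  have hneg := inner_eq_norm_iff_eq_inv_norm_smul hω (neg_ne_zero.2 hx)
  rw [inner_neg_left, norm_neg, smul_neg, neg_eq_iff_eq_neg] at hneg
  rw [sq_eq_sq_iff_eq_or_eq_neg, inner_eq_norm_iff_eq_inv_norm_smul hω hx, hneg]

end UnitVector

/-- properties of the function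
`P(v*,u,ω) = e^{-|u'-v*|²} + e^{-|v'-v*|²} - e^{-|u-v*|²} - 1`, where
`u' = u - [(u-v*)·ω]ω` and `v' = v* + [(u-v*)·ω]ω`. -/
theorem stmt3 {n : ℕ} (vs u ω : EuclideanSpace ℝ (Fin n)) (hω : ‖ω‖ = 1)
    (P : ℝ)
    (hP : P = Real.exp (-‖(u - ⟪u - vs, ω⟫ • ω) - vs‖ ^ 2)
        + Real.exp (-‖(vs + ⟪u - vs, ω⟫ • ω) - vs‖ ^ 2)
        - Real.exp (-‖u - vs‖ ^ 2) - 1) :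
    P = (1 - Real.exp (|⟪u - vs, ω⟫| ^ 2)) *
        (Real.exp (-|⟪u - vs, ω⟫| ^ 2) - Real.exp (-‖u - vs‖ ^ 2)) ∧
    P ≤ 0 ∧
    (u ≠ vs →
      (P = 0 ↔ ⟪vs - u, ω⟫ = 0 ∨ ω = ‖vs - u‖⁻¹ • (vs - u) ∨ ω = -(‖vs - u‖⁻¹ • (vs - u)))) := by
  have hu' : (u - ⟪u - vs, ω⟫ • ω) - vs = (u - vs) - ⟪u - vs, ω⟫ • ω := by abel
  have hv' : (vs + ⟪u - vs, ω⟫ • ω) - vs = ⟪u - vs, ω⟫ • ω := by abel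
  have hfactor : P = (1 - Real.exp (⟪u - vs, ω⟫ ^ 2)) *
      (Real.exp (-⟪u - vs, ω⟫ ^ 2) - Real.exp (-‖u - vs‖ ^ 2)) := by
    rw [hP, hu', hv', norm_sub_inner_smul_sq_of_norm_eq_one hω,
      norm_inner_smul_sq_of_norm_eq_one hω, Real.exp_neg_sub_add_exp_neg_sub_exp_neg_sub_one]
  have hswap : ⟪u - vs, ω⟫ ^ 2 = ⟪vs - u, ω⟫ ^ 2 := by
    rw [← neg_sub, inner_neg_left, neg_sq]
  refine ⟨by rw [hfactor, sq_abs], ?_, fun hne => ?_⟩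
  · rw [hfactor]
    exact Real.one_sub_exp_mul_exp_neg_sub_exp_neg_nonpos (sq_nonneg _)
      (sq_inner_le_norm_sq_of_norm_eq_one hω _)
  · rw [hfactor, Real.one_sub_exp_mul_exp_neg_sub_exp_neg_eq_zero_iff, hswap, norm_sub_rev,
      sq_inner_eq_norm_sq_iff hω (sub_ne_zero.2 hne.symm), sq_eq_zero_iff]
end

section
/- Let q ∈ L¹(ℝ^{n+1}) be compactly supported, let r > 0, and fix (τ,ξ) ∈ ℝ×ℝⁿ with ξ ≠ 0 and |τ| ≤ r|ξ|. Choose a unit vector ζ with ξ·ζ = 0 and set v = -(τ/|ξ|²)ξ + (r² - τ²/|ξ|²)^{1/2} ζ. Then |v| = r, τ = -v·ξ, and ∫_{ℝⁿ} L_r q(y,v) e^{-iy·ξ} dy = q̂(τ,ξ), where L_r q(y,v) = ∫_ℝ q(s, y+sv) ds is the light ray transform and q̂ is the (n+1)-dimensional Fourier transform of q. -/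
/-!
The shear `(s, x) ↦ (s, x + s v)` preserves the product measure on `ℝ × ℝⁿ`. Composing
`q(s, x) e^{-i(sτ + x·ξ)}` with it removes the time frequency, because
`sτ + (x + s v)·ξ = x·ξ` exactly when `τ = -v·ξ`, and Fubini then turns the integral into the
Fourier transform in `y` of the light ray transform. The vector `v` is built from orthogonal
components along `ξ` and `ζ`: the first fixes `v·ξ = -τ`, and Pythagoras gives
`|v|² = τ²/|ξ|² + (r² - τ²/|ξ|²) = r²`, the square root being real because `|τ| ≤ r|ξ|`.
-/

open MeasureTheory
open scoped RealInnerProductSpace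

section Direction

variable {F : Type*} [NormedAddCommGroup F] [InnerProductSpace ℝ F]

theorem inner_neg_div_smul_add_smul_of_inner_eq_zero {ξ ζ : F} (hξ : ξ ≠ 0)
    (horth : ⟪ξ, ζ⟫ = 0) (τ c : ℝ) :
    ⟪(-(τ / ‖ξ‖ ^ 2)) • ξ + c • ζ, ξ⟫ = -τ := by
  have hξ' : ‖ξ‖ ≠ 0 := norm_ne_zero_iff.mpr hξ
  rw [inner_add_left, real_inner_smul_left, real_inner_smul_left, real_inner_comm ξ ζ, horth,
    real_inner_self_eq_norm_sq]
  field_simp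
  ring

theorem norm_neg_div_smul_add_sqrt_smul {ξ ζ : F} {τ r : ℝ} (hξ : ξ ≠ 0)
    (hτ : |τ| ≤ r * ‖ξ‖) (hζ : ‖ζ‖ = 1) (horth : ⟪ξ, ζ⟫ = 0) :
    ‖(-(τ / ‖ξ‖ ^ 2)) • ξ + √(r ^ 2 - τ ^ 2 / ‖ξ‖ ^ 2) • ζ‖ = r := by
  have hξ' : 0 < ‖ξ‖ := norm_pos_iff.mpr hξ
  have hr : 0 ≤ r := nonneg_of_mul_nonneg_left ((abs_nonneg τ).trans hτ) hξ'
  have hrad : 0 ≤ r ^ 2 - τ ^ 2 / ‖ξ‖ ^ 2 := by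
    rw [sub_nonneg, div_le_iff₀ (by positivity), ← mul_pow, ← sq_abs τ]
    exact pow_le_pow_left₀ (abs_nonneg τ) hτ 2
  have horth' : ⟪(-(τ / ‖ξ‖ ^ 2)) • ξ, √(r ^ 2 - τ ^ 2 / ‖ξ‖ ^ 2) • ζ⟫ = 0 := by
    rw [real_inner_smul_left, real_inner_smul_right, horth, mul_zero, mul_zero]
  rw [← sq_eq_sq₀ (norm_nonneg _) hr, sq, norm_add_sq_eq_norm_sq_add_norm_sq_real horth',
    norm_smul, norm_smul, hζ, mul_one, Real.norm_of_nonneg (Real.sqrt_nonneg _),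
    Real.mul_self_sqrt hrad, mul_mul_mul_comm, Real.norm_eq_abs, abs_mul_abs_self]
  field_simp
  ring

end Direction

section Shear

variable {E : Type*} [NormedAddCommGroup E] [NormedSpace ℝ E] [MeasurableSpace E] [BorelSpace E]
  [SecondCountableTopology E]

def shearEquiv (v : E) : ℝ × E ≃ᵐ ℝ × E where
  toFun p := (p.1, p.2 + p.1 • v)
  invFun p := (p.1, p.2 - p.1 • v)
  left_inv p := by simp
  right_inv p := by simp
  measurable_toFun := by
    change Measurable fun p : ℝ × E => (p.1, p.2 + p.1 • v)
    fun_prop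
  measurable_invFun := by
    change Measurable fun p : ℝ × E => (p.1, p.2 - p.1 • v)
    fun_prop

@[simp]
theorem shearEquiv_apply (v : E) (p : ℝ × E) : shearEquiv v p = (p.1, p.2 + p.1 • v) :=
  rfl

theorem measurePreserving_shearEquiv (ν : Measure ℝ) (μ : Measure E) [SFinite ν] [SFinite μ]
    [μ.IsAddRightInvariant] (v : E) : MeasurePreserving (shearEquiv v) (ν.prod μ) (ν.prod μ) :=
  (MeasurePreserving.id ν).skew_product (g := fun s x => x + s • v) (by fun_prop)
    (.of_forall fun s => map_add_right_eq_self μ (s • v))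

end Shear

theorem MeasureTheory.Integrable.mul_exp_neg_I_mul {α : Type*} [MeasurableSpace α] {μ : Measure α}
    {f : α → ℂ} (hf : Integrable f μ) {φ : α → ℝ} (hφ : Measurable φ) :
    Integrable (fun x => f x * Complex.exp (-Complex.I * φ x)) μ :=
  hf.mul_bdd (c := 1) (by fun_prop) (.of_forall fun x => by simp [Complex.norm_exp])

theorem integral_lightRay_mul_exp {E : Type*} [NormedAddCommGroup E] [InnerProductSpace ℝ E]
    [MeasurableSpace E] [BorelSpace E] [SecondCountableTopology E]
    (ν : Measure ℝ) (μ : Measure E) [SFinite ν] [SFinite μ] [μ.IsAddRightInvariant]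
    {q : ℝ × E → ℂ} (hq : Integrable q (ν.prod μ)) {v ξ : E} {τ : ℝ} (hvξ : ⟪v, ξ⟫ = -τ) :
    ∫ y, (∫ s, q (s, y + s • v) ∂ν) * Complex.exp (-Complex.I * (⟪y, ξ⟫ : ℝ)) ∂μ
      = ∫ p, q p * Complex.exp (-Complex.I * ((p.1 * τ + ⟪p.2, ξ⟫ : ℝ))) ∂(ν.prod μ) := by
  have hshear := measurePreserving_shearEquiv ν μ v
  have hint : Integrable (fun p => q (shearEquiv v p) * Complex.exp (-Complex.I * (⟪p.2, ξ⟫ : ℝ)))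
      (ν.prod μ) :=
    ((hshear.integrable_comp_emb (shearEquiv v).measurableEmbedding).mpr hq).mul_exp_neg_I_mul
      (by fun_prop)
  have hphase (p : ℝ × E) : (shearEquiv v p).1 * τ + ⟪(shearEquiv v p).2, ξ⟫ = ⟪p.2, ξ⟫ := by
    rw [shearEquiv_apply, inner_add_left, real_inner_smul_left, hvξ]
    ring
  calc _ = ∫ y, ∫ s, q (shearEquiv v (s, y)) * Complex.exp (-Complex.I * (⟪y, ξ⟫ : ℝ)) ∂ν ∂μ := by
        simp_rw [integral_mul_const, shearEquiv_apply]
    _ = ∫ p, q (shearEquiv v p) * Complex.exp (-Complex.I * (⟪p.2, ξ⟫ : ℝ)) ∂(ν.prod μ) :=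
        (integral_prod_symm _ hint).symm
    _ = _ := by
        refine (integral_congr_ae (.of_forall fun p => ?_)).trans (hshear.integral_comp' _)
        rw [hphase]

theorem stmt11_general {n : ℕ} (r : ℝ)
    (q : ℝ × EuclideanSpace ℝ (Fin n) → ℂ)
    (hq : Integrable q)
    (τ : ℝ) (ξ ζ : EuclideanSpace ℝ (Fin n)) (hξ : ξ ≠ 0)
    (hτ : |τ| ≤ r * ‖ξ‖) (hζ : ‖ζ‖ = 1) (horth : ⟪ξ, ζ⟫ = 0)
    (v : EuclideanSpace ℝ (Fin n))
    (hv : v = (-(τ / ‖ξ‖ ^ 2)) • ξ + Real.sqrt (r ^ 2 - τ ^ 2 / ‖ξ‖ ^ 2) • ζ) :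
    ‖v‖ = r ∧ τ = -⟪v, ξ⟫ ∧
    (∫ y : EuclideanSpace ℝ (Fin n),
        (∫ s : ℝ, q (s, y + s • v)) * Complex.exp (-Complex.I * (⟪y, ξ⟫ : ℝ)))
      = ∫ p : ℝ × EuclideanSpace ℝ (Fin n),
          q p * Complex.exp (-Complex.I * ((p.1 * τ + ⟪p.2, ξ⟫ : ℝ))) := by
  have hvξ : ⟪v, ξ⟫ = -τ := hv ▸ inner_neg_div_smul_add_smul_of_inner_eq_zero hξ horth τ _
  rw [Measure.volume_eq_prod] at hq ⊢
  exact ⟨hv ▸ norm_neg_div_smul_add_sqrt_smul hξ hτ hζ horth, by rw [hvξ, neg_neg],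
    integral_lightRay_mul_exp volume volume hq hvξ⟩

/-- for integrable compactly supported `q`, a spacelike frequency
`(τ,ξ)` with `|τ| ≤ r|ξ|`, and `v = -(τ/|ξ|²)ξ + (r² - τ²/|ξ|²)^{1/2} ζ` with `ζ ⊥ ξ`
a unit vector, one has `|v| = r`, `τ = -v·ξ`, and the Fourier transform (in `y`) of
the light ray transform `L_r q(·,v)` equals `q̂(τ,ξ)`. -/
theorem stmt11 {n : ℕ} (hn : 2 ≤ n) (r : ℝ) (hr : 0 < r)
    (q : ℝ × EuclideanSpace ℝ (Fin n) → ℂ)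
    (hq : Integrable q) (hsupp : HasCompactSupport q)
    (τ : ℝ) (ξ ζ : EuclideanSpace ℝ (Fin n)) (hξ : ξ ≠ 0)
    (hτ : |τ| ≤ r * ‖ξ‖) (hζ : ‖ζ‖ = 1) (horth : ⟪ξ, ζ⟫ = 0)
    (v : EuclideanSpace ℝ (Fin n))
    (hv : v = (-(τ / ‖ξ‖ ^ 2)) • ξ + Real.sqrt (r ^ 2 - τ ^ 2 / ‖ξ‖ ^ 2) • ζ) :
    ‖v‖ = r ∧ τ = -⟪v, ξ⟫ ∧
    (∫ y : EuclideanSpace ℝ (Fin n),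
        (∫ s : ℝ, q (s, y + s • v)) * Complex.exp (-Complex.I * (⟪y, ξ⟫ : ℝ)))
      = ∫ p : ℝ × EuclideanSpace ℝ (Fin n),
          q p * Complex.exp (-Complex.I * ((p.1 * τ + ⟪p.2, ξ⟫ : ℝ))) :=
  stmt11_general r q hq τ ξ ζ hξ hτ hζ horth v hv
end
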